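/- arXiv:math/0608116 — 5 statements merged into one kernel-verified Lean document; each statement's English description precedes it below -/
import Mathlib

section
/- Let B be a Boolean algebra, let □ : B → B satisfy the modal axioms (m.i) and (m.ii) together with the coherence condition □⊥ = ⊥, and let p be a finitely additive probability on B. Then the belief Bel(x) = p(□x) is sub-additive: for all x, y ∈ B with x ⊓ y = ⊥, p(□x) + p(□y) ≤ p(□(x ⊔ y)). -/
/-! (m.i) and (m.ii) make □ monotone, and with □⊥ = ⊥ they give □yᶜ ≤ (□y)ᶜ, so □ maps
disjoint elements to disjoint ones. Hence □x ⊔ □y is a disjoint join below □(x ⊔ y), and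
additivity together with monotonicity of p finishes. -/

section Modal

variable {B : Type*} [BooleanAlgebra B] {box : B → B}

theorem monotone_of_modal (mi : box ⊤ = ⊤)
    (mii : ∀ x y : B, box (xᶜ ⊔ y) ≤ (box x)ᶜ ⊔ box y) : Monotone box := by
  intro a b hab
  -- `a ≤ b` makes `aᶜ ⊔ b = ⊤`, so (m.i) forces `(box a)ᶜ ⊔ box b = ⊤`
  have h := mii a b
  rwa [sup_comm, ← himp_eq, himp_eq_top_iff.mpr hab, mi, top_le_iff, sup_comm, ← himp_eq,
    himp_eq_top_iff] at h

theorem box_compl_le_compl_box (mii : ∀ x y : B, box (xᶜ ⊔ y) ≤ (box x)ᶜ ⊔ box y)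
    (coherent : box ⊥ = ⊥) (y : B) : box yᶜ ≤ (box y)ᶜ := by
  simpa [coherent] using mii y ⊥

theorem Disjoint.box_of_modal (mi : box ⊤ = ⊤)
    (mii : ∀ x y : B, box (xᶜ ⊔ y) ≤ (box x)ᶜ ⊔ box y) (coherent : box ⊥ = ⊥)
    {x y : B} (hxy : Disjoint x y) : Disjoint (box x) (box y) :=
  le_compl_iff_disjoint_right.mp <|
    (monotone_of_modal mi mii (le_compl_iff_disjoint_right.mpr hxy)).trans
      (box_compl_le_compl_box mii coherent y)

end Modal

theorem monotone_of_nonneg_of_additive {B : Type*} [BooleanAlgebra B] {p : B → ℝ}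
    (hp0 : ∀ x : B, 0 ≤ p x) (hpadd : ∀ x y : B, x ⊓ y = ⊥ → p (x ⊔ y) = p x + p y) :
    Monotone p := by
  intro a b hab
  have h := hpadd a (b \ a) disjoint_sdiff_self_right.eq_bot
  rw [sup_sdiff_cancel_right hab] at h
  linarith [hp0 (b \ a)]

theorem belief_subadditive_general {B : Type*} [BooleanAlgebra B] (box : B → B)
    (mi : box ⊤ = ⊤)
    (mii : ∀ x y : B, box (xᶜ ⊔ y) ≤ (box x)ᶜ ⊔ box y)
    (coherent : box ⊥ = ⊥)
    (p : B → ℝ)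
    (hp0 : ∀ x : B, 0 ≤ p x)
    (hpadd : ∀ x y : B, x ⊓ y = ⊥ → p (x ⊔ y) = p x + p y) :
    ∀ x y : B, x ⊓ y = ⊥ → p (box x) + p (box y) ≤ p (box (x ⊔ y)) := by
  intro x y hxy
  have hbox := monotone_of_modal mi mii
  have hdisj : box x ⊓ box y = ⊥ :=
    (Disjoint.box_of_modal mi mii coherent (disjoint_iff.mpr hxy)).eq_bot
  calc p (box x) + p (box y) = p (box x ⊔ box y) := (hpadd _ _ hdisj).symm
    _ ≤ p (box (x ⊔ y)) :=
      monotone_of_nonneg_of_additive hp0 hpadd (sup_le (hbox le_sup_left) (hbox le_sup_right))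

/-- For a coherent modality satisfying (m.i) and (m.ii) and a finitely
additive probability `p`, the belief `Bel(x) = p(□x)` is sub-additive: for disjoint
`x, y`, `p(□x) + p(□y) ≤ p(□(x ⊔ y))`. -/
theorem belief_subadditive {B : Type*} [BooleanAlgebra B] (box : B → B)
    (mi : box ⊤ = ⊤)
    (mii : ∀ x y : B, box (xᶜ ⊔ y) ≤ (box x)ᶜ ⊔ box y)
    (coherent : box ⊥ = ⊥)
    (p : B → ℝ)
    (hp0 : ∀ x : B, 0 ≤ p x)
    (hptop : p ⊤ = 1)
    (hpadd : ∀ x y : B, x ⊓ y = ⊥ → p (x ⊔ y) = p x + p y) :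
    ∀ x y : B, x ⊓ y = ⊥ → p (box x) + p (box y) ≤ p (box (x ⊔ y)) :=
  belief_subadditive_general box mi mii coherent p hp0 hpadd
end

section
/- Let I and J be finite types and let m₁ : I → ℝ and m₂ : J → ℝ be nonnegative functions with ∑_i m₁(i) = 1 and ∑_j m₂(j) = 1. Define the entropy H(f) = ∑_{(i,j)} −f(i,j)·ln f(i,j) (with the convention 0·ln 0 = 0). Then the product function f₀(i,j) = m₁(i)·m₂(j) maximizes H among all f : I × J → ℝ satisfying f ≥ 0, ∑_i f(i,j) = m₂(j) for all j, and ∑_j f(i,j) = m₁(i) for all i; that is, for every such f, H(f) ≤ H(f₀). -/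
/-!
Gibbs' inequality `H(f) ≤ -∑ f log g`, valid for any `g ≥ 0` of the same mass whose zeros are
zeros of `f`, applied with `g = m₁ ⊗ m₂`. Because `f` has marginals `m₁` and `m₂`, its cross
entropy against `m₁ ⊗ m₂` is `H(m₁) + H(m₂)`, which is also `H(m₁ ⊗ m₂)`.
-/

open Real Finset

lemma negMulLog_add_mul_log_le {a b : ℝ} (ha : 0 ≤ a) (hb : 0 ≤ b) (hab : b = 0 → a = 0) :
    negMulLog a + a * log b ≤ b - a := by
  rcases hb.eq_or_lt with rfl | hb
  · simp [hab rfl]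
  have hsplit : negMulLog a + a * log b = b * negMulLog (a / b) := by
    have hmul := negMulLog_mul (a / b) b
    have hlog : a / b * negMulLog b = -(a * log b) := by rw [negMulLog]; field_simp
    rw [div_mul_cancel₀ a hb.ne'] at hmul
    linarith
  calc negMulLog a + a * log b = b * negMulLog (a / b) := hsplit
    _ ≤ b * (1 - a / b) := by gcongr; exact negMulLog_le_one_sub_self (div_nonneg ha hb.le)
    _ = b - a := by field_simp

theorem sum_negMulLog_le_neg_sum_mul_log {α : Type*} [Fintype α] {f g : α → ℝ}
    (hf : ∀ x, 0 ≤ f x) (hg : ∀ x, 0 ≤ g x) (hfg : ∀ x, g x = 0 → f x = 0)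
    (hmass : ∑ x, f x = ∑ x, g x) :
    ∑ x, negMulLog (f x) ≤ -∑ x, f x * log (g x) := by
  have := sum_le_sum fun x (_ : x ∈ univ) => negMulLog_add_mul_log_le (hf x) (hg x) (hfg x)
  rw [sum_add_distrib, sum_sub_distrib, hmass] at this
  linarith

theorem sum_negMulLog_mul {I J : Type*} [Fintype I] [Fintype J] (m₁ : I → ℝ) (m₂ : J → ℝ) :
    ∑ q : I × J, negMulLog (m₁ q.1 * m₂ q.2) =
      (∑ j, m₂ j) * ∑ i, negMulLog (m₁ i) + (∑ i, m₁ i) * ∑ j, negMulLog (m₂ j) := by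
  rw [Fintype.sum_prod_type]
  simp only [negMulLog_mul, sum_add_distrib, ← sum_mul, ← mul_sum]

section Marginals

variable {I J : Type*} [Fintype I] [Fintype J] {f : I × J → ℝ} {m₁ : I → ℝ} {m₂ : J → ℝ}

lemma apply_eq_zero_of_marginal_mul_eq_zero (hf : ∀ q, 0 ≤ f q)
    (hmarg₂ : ∀ j, ∑ i, f (i, j) = m₂ j) (hmarg₁ : ∀ i, ∑ j, f (i, j) = m₁ i) {i : I} {j : J}
    (h : m₁ i * m₂ j = 0) : f (i, j) = 0 := by
  rcases mul_eq_zero.1 h with h | h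
  · exact (sum_eq_zero_iff_of_nonneg fun j _ => hf (i, j)).1 ((hmarg₁ i).trans h) j (mem_univ j)
  · exact (sum_eq_zero_iff_of_nonneg fun i _ => hf (i, j)).1 ((hmarg₂ j).trans h) i (mem_univ i)

theorem neg_sum_mul_log_marginal_mul (hf : ∀ q, 0 ≤ f q)
    (hmarg₂ : ∀ j, ∑ i, f (i, j) = m₂ j) (hmarg₁ : ∀ i, ∑ j, f (i, j) = m₁ i) :
    -∑ q, f q * log (m₁ q.1 * m₂ q.2) = ∑ i, negMulLog (m₁ i) + ∑ j, negMulLog (m₂ j) := by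
  have hsplit : ∀ q : I × J,
      f q * log (m₁ q.1 * m₂ q.2) = f q * log (m₁ q.1) + f q * log (m₂ q.2) := by
    rintro ⟨i, j⟩
    rcases eq_or_ne (m₁ i * m₂ j) 0 with h | h
    · simp [apply_eq_zero_of_marginal_mul_eq_zero hf hmarg₂ hmarg₁ h]
    · rw [log_mul (left_ne_zero_of_mul h) (right_ne_zero_of_mul h), mul_add]
  simp only [hsplit, sum_add_distrib, negMulLog, neg_mul, sum_neg_distrib, neg_add]
  rw [Fintype.sum_prod_type, Fintype.sum_prod_type_right]
  simp only [← sum_mul, hmarg₁, hmarg₂]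

end Marginals

theorem product_maximizes_entropy_general {I J : Type*} [Fintype I] [Fintype J]
    (m₁ : I → ℝ) (m₂ : J → ℝ)
    (hs₁ : ∑ i, m₁ i = 1) (hs₂ : ∑ j, m₂ j = 1)
    (f : I × J → ℝ)
    (hf : ∀ q, 0 ≤ f q)
    (hmarg₂ : ∀ j, ∑ i, f (i, j) = m₂ j)
    (hmarg₁ : ∀ i, ∑ j, f (i, j) = m₁ i) :
    ∑ q : I × J, -(f q * Real.log (f q)) ≤
      ∑ q : I × J, -(m₁ q.1 * m₂ q.2 * Real.log (m₁ q.1 * m₂ q.2)) := by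
  have hm₁ : ∀ i, 0 ≤ m₁ i := fun i => hmarg₁ i ▸ sum_nonneg fun j _ => hf (i, j)
  have hm₂ : ∀ j, 0 ≤ m₂ j := fun j => hmarg₂ j ▸ sum_nonneg fun i _ => hf (i, j)
  have hmass : ∑ q, f q = ∑ q : I × J, m₁ q.1 * m₂ q.2 := by
    simp only [Fintype.sum_prod_type, hmarg₁, ← mul_sum, hs₂, mul_one]
  simp only [fun x => (congrFun negMulLog_eq_neg x).symm]
  calc ∑ q, negMulLog (f q) ≤ -∑ q, f q * log (m₁ q.1 * m₂ q.2) :=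
        sum_negMulLog_le_neg_sum_mul_log hf (fun q => mul_nonneg (hm₁ q.1) (hm₂ q.2))
          (fun _ => apply_eq_zero_of_marginal_mul_eq_zero hf hmarg₂ hmarg₁) hmass
    _ = ∑ i, negMulLog (m₁ i) + ∑ j, negMulLog (m₂ j) :=
        neg_sum_mul_log_marginal_mul hf hmarg₂ hmarg₁
    _ = ∑ q : I × J, negMulLog (m₁ q.1 * m₂ q.2) := by rw [sum_negMulLog_mul, hs₁, hs₂]; ring

/-- The product `f₀(i,j) = m₁(i)·m₂(j)` maximizes the entropy
`H(f) = ∑ −f(i,j)·ln f(i,j)` among all nonnegative `f` with marginals `m₁`, `m₂`.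
(The convention `0·ln 0 = 0` holds automatically since `Real.log 0 = 0`.) -/
theorem product_maximizes_entropy {I J : Type*} [Fintype I] [Fintype J]
    (m₁ : I → ℝ) (m₂ : J → ℝ)
    (hm₁ : ∀ i, 0 ≤ m₁ i) (hm₂ : ∀ j, 0 ≤ m₂ j)
    (hs₁ : ∑ i, m₁ i = 1) (hs₂ : ∑ j, m₂ j = 1)
    (f : I × J → ℝ)
    (hf : ∀ q, 0 ≤ f q)
    (hmarg₂ : ∀ j, ∑ i, f (i, j) = m₂ j)
    (hmarg₁ : ∀ i, ∑ j, f (i, j) = m₁ i) :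
    ∑ q : I × J, -(f q * Real.log (f q)) ≤
      ∑ q : I × J, -(m₁ q.1 * m₂ q.2 * Real.log (m₁ q.1 * m₂ q.2)) :=
  product_maximizes_entropy_general m₁ m₂ hs₁ hs₂ f hf hmarg₂ hmarg₁
end

section
/- Let B be a Boolean algebra, S a finite subset of B closed under meet and containing ⊥ and ⊤, and m₁, m₂ bbas on S. Suppose f : S × S → ℝ satisfies the fusion constraints for (m₁, m₂), and define the fused bba m₁⊕m₂ and the belief functions Bel₁, Bel₂, Bel₁⊕Bel₂ accordingly. Then the fused belief dominates both input beliefs: for every φ ∈ S, Bel₁⊕Bel₂(φ) ≥ max{Bel₁(φ), Bel₂(φ)}. -/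
open scoped Classical

/-!
Group the mass `f (ψ, η)` of a pair under its meet `ψ ⊓ η`: as `S` is closed under meets, the
fused belief of `φ` is the total `f`-mass of the pairs whose meet lies below `φ`. This set of pairs
contains every pair whose first (resp. second) component lies below `φ`, and by the marginal
constraints the `f`-mass of those pairs is `Bel₁ φ` (resp. `Bel₂ φ`); since `f ≥ 0` the claim follows.
-/

namespace Finset

section Marginals

variable {α M : Type*} [AddCommMonoid M] [PartialOrder M] [IsOrderedAddMonoid M] {S : Finset α}
  {f : α → α → M} {m : α → M} {T : Finset α} {s : Finset (α × α)}

theorem sum_le_sum_of_row_sums (hf0 : ∀ ψ ∈ S, ∀ η ∈ S, 0 ≤ f ψ η)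
    (hrow : ∀ ψ ∈ S, ∑ η ∈ S, f ψ η = m ψ) (hT : T ⊆ S) (hs : s ⊆ S ×ˢ S) (hTs : T ×ˢ S ⊆ s) :
    ∑ ψ ∈ T, m ψ ≤ ∑ q ∈ s, f q.1 q.2 :=
  calc ∑ ψ ∈ T, m ψ = ∑ q ∈ T ×ˢ S, f q.1 q.2 := by
        rw [sum_product]
        exact sum_congr rfl fun ψ hψ => (hrow ψ (hT hψ)).symm
    _ ≤ ∑ q ∈ s, f q.1 q.2 := sum_le_sum_of_subset_of_nonneg hTs fun q hq _ =>
        hf0 _ (mem_product.1 (hs hq)).1 _ (mem_product.1 (hs hq)).2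

theorem sum_le_sum_of_col_sums (hf0 : ∀ ψ ∈ S, ∀ η ∈ S, 0 ≤ f ψ η)
    (hcol : ∀ η ∈ S, ∑ ψ ∈ S, f ψ η = m η) (hT : T ⊆ S) (hs : s ⊆ S ×ˢ S) (hTs : S ×ˢ T ⊆ s) :
    ∑ η ∈ T, m η ≤ ∑ q ∈ s, f q.1 q.2 :=
  calc ∑ η ∈ T, m η = ∑ q ∈ S ×ˢ T, f q.1 q.2 := by
        rw [sum_product_right]
        exact sum_congr rfl fun η hη => (hcol η (hT hη)).symm
    _ ≤ ∑ q ∈ s, f q.1 q.2 := sum_le_sum_of_subset_of_nonneg hTs fun q hq _ =>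
        hf0 _ (mem_product.1 (hs hq)).1 _ (mem_product.1 (hs hq)).2

end Marginals

section Lattice

variable {α M : Type*} [SemilatticeInf α] {S : Finset α}

theorem sum_filter_le_sum_fiber_inf_eq (hmeet : ∀ x ∈ S, ∀ y ∈ S, x ⊓ y ∈ S) [AddCommMonoid M]
    (f : α → α → M) (φ : α) :
    ∑ ψ ∈ S.filter (· ≤ φ), ∑ q ∈ (S ×ˢ S).filter (fun q => q.1 ⊓ q.2 = ψ), f q.1 q.2 =
      ∑ q ∈ (S ×ˢ S).filter (fun q => q.1 ⊓ q.2 ≤ φ), f q.1 q.2 := by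
  rw [sum_fiberwise_eq_sum_filter (S ×ˢ S) _ (fun q => q.1 ⊓ q.2) fun q => f q.1 q.2]
  refine sum_congr (filter_congr fun q hq => ?_) fun _ _ => rfl
  rw [mem_product] at hq
  simp only [mem_filter, hmeet _ hq.1 _ hq.2, true_and]

theorem filter_le_product_subset_filter_inf_le (φ : α) :
    S.filter (· ≤ φ) ×ˢ S ⊆ (S ×ˢ S).filter (fun q => q.1 ⊓ q.2 ≤ φ) := by
  rintro ⟨ψ, η⟩ hq
  simp only [mem_product, mem_filter] at hq ⊢
  exact ⟨⟨hq.1.1, hq.2⟩, inf_le_left.trans hq.1.2⟩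

theorem product_filter_le_subset_filter_inf_le (φ : α) :
    S ×ˢ S.filter (· ≤ φ) ⊆ (S ×ˢ S).filter (fun q => q.1 ⊓ q.2 ≤ φ) := by
  rintro ⟨ψ, η⟩ hq
  simp only [mem_product, mem_filter] at hq ⊢
  exact ⟨⟨hq.1, hq.2.1⟩, inf_le_right.trans hq.2.2⟩

end Lattice

end Finset

open Finset in
theorem fused_belief_enhancement_general {B : Type*} [BooleanAlgebra B]
    (S : Finset B)
    (hmeet : ∀ x ∈ S, ∀ y ∈ S, x ⊓ y ∈ S)
    (m₁ m₂ : B → ℝ)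
    (f : B → B → ℝ)
    (hf0 : ∀ ψ ∈ S, ∀ η ∈ S, 0 ≤ f ψ η)
    (hfm₂ : ∀ η ∈ S, ∑ ψ ∈ S, f ψ η = m₂ η)
    (hfm₁ : ∀ ψ ∈ S, ∑ η ∈ S, f ψ η = m₁ ψ) :
    ∀ φ ∈ S,
      max (∑ ψ ∈ S.filter fun ψ => ψ ≤ φ, m₁ ψ) (∑ ψ ∈ S.filter fun ψ => ψ ≤ φ, m₂ ψ) ≤
        ∑ ψ ∈ S.filter fun ψ => ψ ≤ φ,
          ∑ q ∈ (S ×ˢ S).filter fun q => q.1 ⊓ q.2 = ψ, f q.1 q.2 := by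
  intro φ _
  rw [sum_filter_le_sum_fiber_inf_eq hmeet, max_le_iff]
  exact ⟨sum_le_sum_of_row_sums hf0 hfm₁ (filter_subset _ _) (filter_subset _ _)
      (filter_le_product_subset_filter_inf_le φ),
    sum_le_sum_of_col_sums hf0 hfm₂ (filter_subset _ _) (filter_subset _ _)
      (product_filter_le_subset_filter_inf_le φ)⟩

/-- Belief enhancement: if `f` satisfies the fusion constraints for
`(m₁, m₂)`, the fused belief dominates both input beliefs:
`Bel₁⊕Bel₂(φ) ≥ max {Bel₁(φ), Bel₂(φ)}` for every `φ ∈ S`. -/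
theorem fused_belief_enhancement {B : Type*} [BooleanAlgebra B]
    (S : Finset B)
    (hmeet : ∀ x ∈ S, ∀ y ∈ S, x ⊓ y ∈ S)
    (hbot : ⊥ ∈ S) (htop : ⊤ ∈ S)
    (m₁ m₂ : B → ℝ)
    (hm₁0 : ∀ φ ∈ S, 0 ≤ m₁ φ) (hm₁bot : m₁ ⊥ = 0) (hm₁sum : ∑ φ ∈ S, m₁ φ = 1)
    (hm₂0 : ∀ φ ∈ S, 0 ≤ m₂ φ) (hm₂bot : m₂ ⊥ = 0) (hm₂sum : ∑ φ ∈ S, m₂ φ = 1)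
    (f : B → B → ℝ)
    (hf0 : ∀ ψ ∈ S, ∀ η ∈ S, 0 ≤ f ψ η)
    (hfm₂ : ∀ η ∈ S, ∑ ψ ∈ S, f ψ η = m₂ η)
    (hfm₁ : ∀ ψ ∈ S, ∑ η ∈ S, f ψ η = m₁ ψ)
    (hfconf : ∀ ψ ∈ S, ∀ η ∈ S, ψ ⊓ η = ⊥ → f ψ η = 0) :
    ∀ φ ∈ S,
      max (∑ ψ ∈ S.filter fun ψ => ψ ≤ φ, m₁ ψ) (∑ ψ ∈ S.filter fun ψ => ψ ≤ φ, m₂ ψ) ≤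
        ∑ ψ ∈ S.filter fun ψ => ψ ≤ φ,
          ∑ q ∈ (S ×ˢ S).filter fun q => q.1 ⊓ q.2 = ψ, f q.1 q.2 :=
  fused_belief_enhancement_general S hmeet m₁ m₂ f hf0 hfm₂ hfm₁
end

section
/- Let B be a Boolean algebra, S a finite subset of B closed under meet and containing ⊥ and ⊤, and m₁, m₂ bbas on S. Suppose there exists f : S × S → ℝ satisfying the fusion constraints for (m₁, m₂). If φ₁, …, φₙ ∈ S are pairwise disjoint (φᵢ ⊓ φⱼ = ⊥ for i ≠ j), then ∑_{i=1}^{n} max{Bel₁(φᵢ), Bel₂(φᵢ)} ≤ 1. -/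
open scoped Classical

/-- If the fusion constraints for `(m₁, m₂)` are feasible and
`φ₁, …, φₙ ∈ S` are pairwise disjoint, then
`∑ᵢ max {Bel₁(φᵢ), Bel₂(φᵢ)} ≤ 1`. -/
theorem sum_max_belief_le_one {B : Type*} [BooleanAlgebra B]
    (S : Finset B)
    (hmeet : ∀ x ∈ S, ∀ y ∈ S, x ⊓ y ∈ S)
    (hbot : ⊥ ∈ S) (htop : ⊤ ∈ S)
    (m₁ m₂ : B → ℝ)
    (hm₁0 : ∀ φ ∈ S, 0 ≤ m₁ φ) (hm₁bot : m₁ ⊥ = 0) (hm₁sum : ∑ φ ∈ S, m₁ φ = 1)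
    (hm₂0 : ∀ φ ∈ S, 0 ≤ m₂ φ) (hm₂bot : m₂ ⊥ = 0) (hm₂sum : ∑ φ ∈ S, m₂ φ = 1)
    (f : B → B → ℝ)
    (hf0 : ∀ ψ ∈ S, ∀ η ∈ S, 0 ≤ f ψ η)
    (hfm₂ : ∀ η ∈ S, ∑ ψ ∈ S, f ψ η = m₂ η)
    (hfm₁ : ∀ ψ ∈ S, ∑ η ∈ S, f ψ η = m₁ ψ)
    (hfconf : ∀ ψ ∈ S, ∀ η ∈ S, ψ ⊓ η = ⊥ → f ψ η = 0)
    (n : ℕ) (φ : Fin n → B)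
    (hφS : ∀ i, φ i ∈ S)
    (hφdisj : ∀ i j, i ≠ j → φ i ⊓ φ j = ⊥) :
    ∑ i : Fin n,
        max (∑ ψ ∈ S.filter fun ψ => ψ ≤ φ i, m₁ ψ)
          (∑ ψ ∈ S.filter fun ψ => ψ ≤ φ i, m₂ ψ) ≤ 1 := by
  classical
  set P : Finset (B × B) := S ×ˢ S with hP
  set A : Fin n → Finset (B × B) :=
    fun i => P.filter (fun p => p.1 ⊓ p.2 ≤ φ i ∧ p.1 ⊓ p.2 ≠ ⊥) with hA
  have hfnn : ∀ p ∈ P, 0 ≤ f p.1 p.2 := by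
    intro p hp
    rw [hP, Finset.mem_product] at hp
    exact hf0 _ hp.1 _ hp.2
  -- Bel₁ bound
  have hbel1 : ∀ i, (∑ ψ ∈ S.filter fun ψ => ψ ≤ φ i, m₁ ψ) ≤ ∑ p ∈ A i, f p.1 p.2 := by
    intro i
    have h1 : (∑ ψ ∈ S.filter fun ψ => ψ ≤ φ i, m₁ ψ)
        = ∑ p ∈ (S.filter (fun ψ => ψ ≤ φ i)) ×ˢ S, f p.1 p.2 := by
      rw [Finset.sum_product]
      exact Finset.sum_congr rfl fun ψ hψ => (hfm₁ ψ (Finset.mem_filter.mp hψ).1).symm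
    have h2 : (∑ p ∈ (S.filter (fun ψ => ψ ≤ φ i)) ×ˢ S, f p.1 p.2)
        = ∑ p ∈ ((S.filter (fun ψ => ψ ≤ φ i)) ×ˢ S).filter
            (fun p => p.1 ⊓ p.2 ≠ ⊥), f p.1 p.2 := by
      refine (Finset.sum_filter_of_ne ?_).symm
      intro p hp hne hbot'
      rw [Finset.mem_product, Finset.mem_filter] at hp
      exact hne (hfconf _ hp.1.1 _ hp.2 hbot')
    rw [h1, h2]
    apply Finset.sum_le_sum_of_subset_of_nonneg
    · intro p hp
      rw [Finset.mem_filter, Finset.mem_product, Finset.mem_filter] at hp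
      rw [hA]
      simp only [Finset.mem_filter]
      exact ⟨Finset.mem_product.mpr ⟨hp.1.1.1, hp.1.2⟩,
        le_trans inf_le_left hp.1.1.2, hp.2⟩
    · intro p hp _
      exact hfnn p (Finset.filter_subset _ _ hp)
  -- Bel₂ bound
  have hbel2 : ∀ i, (∑ ψ ∈ S.filter fun ψ => ψ ≤ φ i, m₂ ψ) ≤ ∑ p ∈ A i, f p.1 p.2 := by
    intro i
    have h1 : (∑ η ∈ S.filter fun ψ => ψ ≤ φ i, m₂ η)
        = ∑ p ∈ S ×ˢ (S.filter (fun ψ => ψ ≤ φ i)), f p.1 p.2 := by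
      rw [Finset.sum_product_right]
      exact Finset.sum_congr rfl fun η hη => (hfm₂ η (Finset.mem_filter.mp hη).1).symm
    have h2 : (∑ p ∈ S ×ˢ (S.filter (fun ψ => ψ ≤ φ i)), f p.1 p.2)
        = ∑ p ∈ (S ×ˢ (S.filter (fun ψ => ψ ≤ φ i))).filter
            (fun p => p.1 ⊓ p.2 ≠ ⊥), f p.1 p.2 := by
      refine (Finset.sum_filter_of_ne ?_).symm
      intro p hp hne hbot'
      rw [Finset.mem_product, Finset.mem_filter] at hp
      exact hne (hfconf _ hp.1 _ hp.2.1 hbot')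
    rw [h1, h2]
    apply Finset.sum_le_sum_of_subset_of_nonneg
    · intro p hp
      rw [Finset.mem_filter, Finset.mem_product, Finset.mem_filter] at hp
      rw [hA]
      simp only [Finset.mem_filter]
      exact ⟨Finset.mem_product.mpr ⟨hp.1.1, hp.1.2.1⟩,
        le_trans inf_le_right hp.1.2.2, hp.2⟩
    · intro p hp _
      exact hfnn p (Finset.filter_subset _ _ hp)
  have hmax : ∀ i : Fin n,
      max (∑ ψ ∈ S.filter fun ψ => ψ ≤ φ i, m₁ ψ)
        (∑ ψ ∈ S.filter fun ψ => ψ ≤ φ i, m₂ ψ) ≤ ∑ p ∈ A i, f p.1 p.2 :=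
    fun i => max_le (hbel1 i) (hbel2 i)
  have hdisj : ((Finset.univ : Finset (Fin n)) : Set (Fin n)).PairwiseDisjoint A := by
    intro i _ j _ hij
    refine Finset.disjoint_left.mpr ?_
    intro p hpi hpj
    rw [hA] at hpi hpj
    simp only [Finset.mem_filter] at hpi hpj
    exact hpi.2.2 (le_antisymm (le_trans (le_inf hpi.2.1 hpj.2.1)
      (le_of_eq (hφdisj i j hij))) bot_le)
  calc ∑ i : Fin n,
        max (∑ ψ ∈ S.filter fun ψ => ψ ≤ φ i, m₁ ψ)
          (∑ ψ ∈ S.filter fun ψ => ψ ≤ φ i, m₂ ψ)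
      ≤ ∑ i : Fin n, ∑ p ∈ A i, f p.1 p.2 := Finset.sum_le_sum fun i _ => hmax i
    _ = ∑ p ∈ Finset.univ.biUnion A, f p.1 p.2 := (Finset.sum_biUnion hdisj).symm
    _ ≤ ∑ p ∈ P, f p.1 p.2 := by
        apply Finset.sum_le_sum_of_subset_of_nonneg
        · intro p hp
          obtain ⟨i, _, hpi⟩ := Finset.mem_biUnion.mp hp
          exact Finset.filter_subset _ _ hpi
        · intro p hp _
          exact hfnn p hp
    _ = 1 := by
        rw [hP, Finset.sum_product]
        rw [Finset.sum_congr rfl fun ψ hψ => hfm₁ ψ hψ]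
        exact hm₁sum
end

section
/- Let α₁, γ₁, β₂, γ₂ be nonnegative real numbers with α₁ + γ₁ ≤ 1, β₂ + γ₂ ≤ 1, α₁ + β₂ < 1, and max{0, α₁ + β₂ + γ₁ + γ₂ − 1} ≤ min{γ₁, γ₂}. Define h(τ) = −τ·ln τ (with h(0) = 0), G(θ) = h(θ) + h(γ₁ − θ) + h(γ₂ − θ) + h(1 − α₁ − β₂ − γ₁ − γ₂ + θ), and θₒ = γ₁γ₂/(1 − α₁ − β₂). Then θₒ satisfies the feasibility bounds max{0, α₁ + β₂ + γ₁ + γ₂ − 1} ≤ θₒ ≤ min{γ₁, γ₂}, and θₒ maximizes G over the feasible interval: for every θ with max{0, α₁ + β₂ + γ₁ + γ₂ − 1} ≤ θ ≤ min{γ₁, γ₂}, G(θ) ≤ G(θₒ). -/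
/-- Gibbs-type inequality: for `p ≥ 0` and `q > 0`,
`p·log q − p·log p ≤ q − p`. -/
lemma gibbs_aux (p q : ℝ) (hp : 0 ≤ p) (hq : 0 < q) :
    p * Real.log q - p * Real.log p ≤ q - p := by
  rcases hp.eq_or_lt with hp0 | hp0
  · simp [← hp0]
    linarith
  · have h1 : Real.log (q / p) ≤ q / p - 1 :=
      Real.log_le_sub_one_of_pos (div_pos hq hp0)
    have h2 : Real.log (q / p) = Real.log q - Real.log p :=
      Real.log_div hq.ne' hp0.ne'
    have h3 := mul_le_mul_of_nonneg_left h1 hp0.le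
    rw [h2] at h3
    have h4 : p * (q / p - 1) = q - p := by field_simp
    nlinarith [h3]

set_option maxHeartbeats 1000000 in
/-- In the generalized Zadeh example, when `α₁ + β₂ < 1` and the
feasibility condition holds, `θₒ = γ₁γ₂/(1 − α₁ − β₂)` lies within the feasibility
bounds and maximizes `G(θ) = h(θ) + h(γ₁ − θ) + h(γ₂ − θ) + h(1 − α₁ − β₂ − γ₁ − γ₂ + θ)`
over the feasible interval, where `h(τ) = −τ·ln τ` (with `h(0) = 0`, which holds
automatically since `Real.log 0 = 0`). -/
theorem zadeh_optimal_theta (α₁ γ₁ β₂ γ₂ : ℝ)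
    (hα₁ : 0 ≤ α₁) (hγ₁ : 0 ≤ γ₁) (hβ₂ : 0 ≤ β₂) (hγ₂ : 0 ≤ γ₂)
    (h₁ : α₁ + γ₁ ≤ 1) (h₂ : β₂ + γ₂ ≤ 1)
    (h₃ : α₁ + β₂ < 1)
    (hfeas : max 0 (α₁ + β₂ + γ₁ + γ₂ - 1) ≤ min γ₁ γ₂)
    (h : ℝ → ℝ) (hh : ∀ τ : ℝ, h τ = -(τ * Real.log τ))
    (G : ℝ → ℝ)
    (hG : ∀ θ : ℝ, G θ = h θ + h (γ₁ - θ) + h (γ₂ - θ) +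
        h (1 - α₁ - β₂ - γ₁ - γ₂ + θ))
    (θₒ : ℝ) (hθₒ : θₒ = γ₁ * γ₂ / (1 - α₁ - β₂)) :
    (max 0 (α₁ + β₂ + γ₁ + γ₂ - 1) ≤ θₒ ∧ θₒ ≤ min γ₁ γ₂) ∧
      ∀ θ : ℝ, max 0 (α₁ + β₂ + γ₁ + γ₂ - 1) ≤ θ → θ ≤ min γ₁ γ₂ →
        G θ ≤ G θₒ := by
  set s : ℝ := 1 - α₁ - β₂ with hs_def
  have hs : 0 < s := by simp only [hs_def]; linarith
  -- bounds γ₁ ≤ s and γ₂ ≤ s from feasibility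
  have hub : α₁ + β₂ + γ₁ + γ₂ - 1 ≤ min γ₁ γ₂ :=
    le_trans (le_max_right _ _) hfeas
  have ha_s : γ₁ ≤ s := by
    have := le_trans hub (min_le_right γ₁ γ₂); simp only [hs_def]; linarith
  have hb_s : γ₂ ≤ s := by
    have := le_trans hub (min_le_left γ₁ γ₂); simp only [hs_def]; linarith
  have hθₒ' : θₒ = γ₁ * γ₂ / s := by rw [hθₒ]
  -- feasibility of θₒ
  have hθₒ0 : 0 ≤ θₒ := by
    rw [hθₒ']; exact div_nonneg (mul_nonneg hγ₁ hγ₂) hs.le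
  have hθₒlo : α₁ + β₂ + γ₁ + γ₂ - 1 ≤ θₒ := by
    rw [hθₒ', le_div_iff₀ hs]; nlinarith [mul_nonneg (sub_nonneg.2 ha_s) (sub_nonneg.2 hb_s)]
  have hθₒa : θₒ ≤ γ₁ := by
    rw [hθₒ', div_le_iff₀ hs]; nlinarith
  have hθₒb : θₒ ≤ γ₂ := by
    rw [hθₒ', div_le_iff₀ hs]; nlinarith
  refine ⟨⟨max_le hθₒ0 hθₒlo, le_min hθₒa hθₒb⟩, ?_⟩
  intro θ hlo hhi
  have h0θ : 0 ≤ θ := le_trans (le_max_left _ _) hlo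
  have hθlo : α₁ + β₂ + γ₁ + γ₂ - 1 ≤ θ := le_trans (le_max_right _ _) hlo
  have hθa : θ ≤ γ₁ := le_trans hhi (min_le_left _ _)
  have hθb : θ ≤ γ₂ := le_trans hhi (min_le_right _ _)
  have hp4 : 0 ≤ s - γ₁ - γ₂ + θ := by simp only [hs_def]; linarith
  -- degenerate cases force θ = θₒ
  rcases eq_or_lt_of_le hγ₁ with hA0 | hA0
  · have hθ0 : θ = θₒ := by
      have : θₒ = 0 := by rw [hθₒ', ← hA0]; simp
      rw [this]; linarith
    exact le_of_eq (by rw [hθ0])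
  rcases eq_or_lt_of_le hγ₂ with hB0 | hB0
  · have hθ0 : θ = θₒ := by
      have : θₒ = 0 := by rw [hθₒ', ← hB0]; simp
      rw [this]; linarith
    exact le_of_eq (by rw [hθ0])
  rcases eq_or_lt_of_le ha_s with hAs | hAs
  · -- γ₁ = s : interval collapses to {γ₂}
    have hθ0 : θ = θₒ := by
      have h1' : θₒ = γ₂ := by
        rw [hθₒ', hAs, mul_comm, mul_div_assoc, div_self hs.ne', mul_one]
      have h2' : θ = γ₂ := by
        have : α₁ + β₂ + γ₁ + γ₂ - 1 = γ₂ := by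
          have : γ₁ = s := hAs; simp only [hs_def] at this; linarith
        linarith [hθlo, hθb, this ▸ hθlo]
      rw [h1', h2']
    exact le_of_eq (by rw [hθ0])
  rcases eq_or_lt_of_le hb_s with hBs | hBs
  · have hθ0 : θ = θₒ := by
      have h1' : θₒ = γ₁ := by
        rw [hθₒ', hBs, mul_div_assoc, div_self hs.ne', mul_one]
      have h2' : θ = γ₁ := by
        have hx : α₁ + β₂ + γ₁ + γ₂ - 1 = γ₁ := by
          have : γ₂ = s := hBs; simp only [hs_def] at this; linarith
        linarith [hx ▸ hθlo, hθa]
      rw [h1', h2']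
    exact le_of_eq (by rw [hθ0])
  -- main case : 0 < γ₁ < s, 0 < γ₂ < s
  have hQ1 : 0 < θₒ := by
    rw [hθₒ']; exact div_pos (mul_pos hA0 hB0) hs
  have hQ2 : 0 < γ₁ - θₒ := by
    have he : γ₁ - θₒ = γ₁ * (s - γ₂) / s := by rw [hθₒ']; field_simp
    rw [he]; exact div_pos (mul_pos hA0 (by linarith)) hs
  have hQ3 : 0 < γ₂ - θₒ := by
    have he : γ₂ - θₒ = γ₂ * (s - γ₁) / s := by rw [hθₒ']; field_simp
    rw [he]; exact div_pos (mul_pos hB0 (by linarith)) hs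
  have hQ4 : 0 < s - γ₁ - γ₂ + θₒ := by
    have he : s - γ₁ - γ₂ + θₒ = (s - γ₁) * (s - γ₂) / s := by
      rw [hθₒ']; field_simp; ring
    rw [he]; exact div_pos (mul_pos (by linarith) (by linarith)) hs
  -- key multiplicative identity
  have hprod : θₒ * (s - γ₁ - γ₂ + θₒ) = (γ₁ - θₒ) * (γ₂ - θₒ) := by
    rw [hθₒ']; field_simp; ring
  have hlog : Real.log θₒ + Real.log (s - γ₁ - γ₂ + θₒ) =
      Real.log (γ₁ - θₒ) + Real.log (γ₂ - θₒ) := by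
    rw [← Real.log_mul hQ1.ne' hQ4.ne', ← Real.log_mul hQ2.ne' hQ3.ne', hprod]
  -- Gibbs inequalities for the four coordinates
  have t1 := gibbs_aux θ θₒ h0θ hQ1
  have t2 := gibbs_aux (γ₁ - θ) (γ₁ - θₒ) (by linarith) hQ2
  have t3 := gibbs_aux (γ₂ - θ) (γ₂ - θₒ) (by linarith) hQ3
  have t4 := gibbs_aux (s - γ₁ - γ₂ + θ) (s - γ₁ - γ₂ + θₒ) hp4 hQ4
  have hzero : (θ - θₒ) * (Real.log θₒ + Real.log (s - γ₁ - γ₂ + θₒ)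
      - Real.log (γ₁ - θₒ) - Real.log (γ₂ - θₒ)) = 0 := by
    rw [show Real.log θₒ + Real.log (s - γ₁ - γ₂ + θₒ)
      - Real.log (γ₁ - θₒ) - Real.log (γ₂ - θₒ) = 0 from by linarith]
    ring
  have hzero' : θ * Real.log θₒ + θ * Real.log (s - γ₁ - γ₂ + θₒ)
      - θ * Real.log (γ₁ - θₒ) - θ * Real.log (γ₂ - θₒ)
      - θₒ * Real.log θₒ - θₒ * Real.log (s - γ₁ - γ₂ + θₒ)
      + θₒ * Real.log (γ₁ - θₒ) + θₒ * Real.log (γ₂ - θₒ) = 0 := by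
    nlinarith [hzero]
  rw [hG, hG, hh, hh, hh, hh, hh, hh, hh, hh]
  linarith [t1, t2, t3, t4, hzero']
end
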